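/- Let R ∈ (0,1), M = B̄(0,1)∖B̄(0,R) ⊂ ℝ², and let F be a spherically symmetric reversible Finsler norm on M satisfying the Herglotz condition. Then (M,F) admits a strictly convex foliation given by ψ(x) = 1 − |x|²: ψ is smooth with dψ ≠ 0 on M, ψ⁻¹{0} = ∂M (the outer boundary), and every level circle is strictly convex in the sense that any geodesic γ of F with γ̇(0) tangent to the circle {|x| = |γ(0)|} satisfies (d²/dt²)ψ(γ(t))|_{t=0} < 0. -/

import Mathlib

/- Polar-coordinate framework for spherically symmetric Finsler norms on the
annulus M = B̄(0,1) ∖ B̄(0,R) ⊂ ℝ².  A spherically symmetric Finsler norm is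
represented by a function `F : ℝ → ℝ → ℝ → ℝ`, `F r ρ φ`, of the radius `r` and
the fiber coordinates `(ρ, φ)` of a tangent vector `y = ρ ∂_r + φ ∂_θ`
(independence of `θ` is spherical symmetry). -/

noncomputable section

open Real Set

/-- The squared norm `F²`. -/
def sq2 (F : ℝ → ℝ → ℝ → ℝ) : ℝ → ℝ → ℝ → ℝ := fun r ρ φ => (F r ρ φ) ^ 2

/-- Partial derivative in the base variable `r`. -/
def pr (f : ℝ → ℝ → ℝ → ℝ) : ℝ → ℝ → ℝ → ℝ := fun r ρ φ => deriv (fun u => f u ρ φ) r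

/-- Partial derivative in the fiber variable `ρ`. -/
def pρ (f : ℝ → ℝ → ℝ → ℝ) : ℝ → ℝ → ℝ → ℝ := fun r ρ φ => deriv (fun u => f r u φ) ρ

/-- Partial derivative in the fiber variable `φ`. -/
def pφ (f : ℝ → ℝ → ℝ → ℝ) : ℝ → ℝ → ℝ → ℝ := fun r ρ φ => deriv (fun u => f r ρ u) φ

/-- The Finslerian metric tensor `g_{ij}(x,y) = (1/2) ∂²F²/∂y^i∂y^j` in the polar
fiber coordinates `(ρ, φ)`. -/
def gM (F : ℝ → ℝ → ℝ → ℝ) (r ρ φ : ℝ) : Matrix (Fin 2) (Fin 2) ℝ :=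
  !![(1/2) * pρ (pρ (sq2 F)) r ρ φ, (1/2) * pφ (pρ (sq2 F)) r ρ φ;
     (1/2) * pρ (pφ (sq2 F)) r ρ φ, (1/2) * pφ (pφ (sq2 F)) r ρ φ]

/-- The vector `y^k ∂²F²/∂x^k∂y^l − ∂F²/∂x^l` (in polar coordinates `x = (r,θ)`,
`y = (ρ,φ)`; all `θ`-derivatives vanish by spherical symmetry). -/
def sprayB (F : ℝ → ℝ → ℝ → ℝ) (r ρ φ : ℝ) : Fin 2 → ℝ :=
  ![ρ * pr (pρ (sq2 F)) r ρ φ - pr (sq2 F) r ρ φ,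
    ρ * pr (pφ (sq2 F)) r ρ φ]

/-- The spray coefficients `G^i(x,y) = (1/4) g^{il}(x,y)(y^k ∂²F²/∂x^k∂y^l − ∂F²/∂x^l)`. -/
def spray (F : ℝ → ℝ → ℝ → ℝ) (r ρ φ : ℝ) : Fin 2 → ℝ :=
  fun i => (1/4) * ((gM F r ρ φ)⁻¹).mulVec (sprayB F r ρ φ) i

/-- `γ(t) = (rr t, θθ t)` (in polar coordinates) is a geodesic of `F` on the set `s`:
it solves `γ̈^i + 2 G^i(γ, γ̇) = 0`. -/
def IsGeodesic (F : ℝ → ℝ → ℝ → ℝ) (s : Set ℝ) (rr θθ : ℝ → ℝ) : Prop :=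
  ∀ t ∈ s,
    deriv (deriv rr) t + 2 * spray F (rr t) (deriv rr t) (deriv θθ t) 0 = 0 ∧
    deriv (deriv θθ) t + 2 * spray F (rr t) (deriv rr t) (deriv θθ t) 1 = 0

/-- `F` (given in the polar representation, hence automatically spherically
symmetric) is a Finsler norm on the annulus `M = {R < r ≤ 1}`. -/
structure IsSphSymFinsler (R : ℝ) (F : ℝ → ℝ → ℝ → ℝ) : Prop where
  smooth : ContDiffOn ℝ (⊤ : ℕ∞) (fun p : ℝ × ℝ × ℝ => F p.1 p.2.1 p.2.2)
      ((Ioc R 1) ×ˢ {y : ℝ × ℝ | y ≠ 0})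
  nonneg : ∀ r ρ φ, 0 ≤ F r ρ φ
  zero_iff : ∀ r ∈ Ioc R 1, ∀ ρ φ : ℝ, F r ρ φ = 0 ↔ (ρ, φ) = (0, 0)
  homog : ∀ r ρ φ : ℝ, ∀ c : ℝ, 0 ≤ c → F r (c * ρ) (c * φ) = c * F r ρ φ
  posdef : ∀ r ∈ Ioc R 1, ∀ ρ φ : ℝ, (ρ, φ) ≠ (0, 0) → (gM F r ρ φ).PosDef


/-- Reversibility: `F(x, -y) = F(x, y)`. -/
def Reversible (F : ℝ → ℝ → ℝ → ℝ) : Prop := ∀ r ρ φ : ℝ, F r (-ρ) (-φ) = F r ρ φ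

/-- The Herglotz condition: `∂_r F²(r, 0, φ) > 0` for all `r ∈ (R, 1]` and `φ ≠ 0`. -/
def Herglotz (R : ℝ) (F : ℝ → ℝ → ℝ → ℝ) : Prop :=
  ∀ r ∈ Ioc R 1, ∀ φ : ℝ, φ ≠ 0 → 0 < pr (sq2 F) r 0 φ

/-- A smooth unit-speed geodesic `γ(t) = (rr t, θθ t)` of `F` defined on `(a,b)` and
lying in the annulus `M = {R < r ≤ 1}`. -/
def GeodesicOn (R : ℝ) (F : ℝ → ℝ → ℝ → ℝ) (a b : ℝ) (rr θθ : ℝ → ℝ) : Prop :=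
  a < b ∧ ContDiffOn ℝ (⊤ : ℕ∞) rr (Ioo a b) ∧ ContDiffOn ℝ (⊤ : ℕ∞) θθ (Ioo a b) ∧
  (∀ t ∈ Ioo a b, rr t ∈ Ioc R 1) ∧
  (∀ t ∈ Ioo a b, F (rr t) (deriv rr t) (deriv θθ t) = 1) ∧
  IsGeodesic F (Ioo a b) rr θθ

/-- Let `R ∈ (0,1)`, `M = B̄(0,1)∖B̄(0,R) ⊂ ℝ²`, and let `F` be a
spherically symmetric reversible Finsler norm on `M` satisfying the Herglotz
condition.  Then `(M,F)` admits a strictly convex foliation given by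
`ψ(x) = 1 − |x|²`: `ψ` is smooth with `dψ ≠ 0` on `M`, `ψ⁻¹{0}` is the outer
boundary sphere `{|x| = 1}`, and every level circle is strictly convex: any geodesic
`γ` with `γ̇(0)` tangent to the circle `{|x| = |γ(0)|}` (i.e. `ṙ(0) = 0` in polar
coordinates) satisfies `(d²/dt²) ψ(γ(t))|_{t=0} < 0`. -/
theorem strictly_convex_foliation
    (R : ℝ) (hR : R ∈ Set.Ioo (0:ℝ) 1)
    (F : ℝ → ℝ → ℝ → ℝ) (hF : IsSphSymFinsler R F) (hrev : Reversible F)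
    (hHerglotz : Herglotz R F)
    (ψ : EuclideanSpace ℝ (Fin 2) → ℝ) (hψ : ∀ x, ψ x = 1 - ‖x‖ ^ 2) :
    ContDiff ℝ (⊤ : ℕ∞) ψ ∧
    (∀ x : EuclideanSpace ℝ (Fin 2), R < ‖x‖ → ‖x‖ ≤ 1 → fderiv ℝ ψ x ≠ 0) ∧
    (ψ ⁻¹' {0} = Metric.sphere (0 : EuclideanSpace ℝ (Fin 2)) 1) ∧
    (∀ (a b : ℝ) (rr θθ : ℝ → ℝ), GeodesicOn R F a b rr θθ →
      0 ∈ Ioo a b → deriv rr 0 = 0 →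
        deriv (deriv (fun t => 1 - (rr t) ^ 2)) 0 < 0) := by
  have hψfun : ψ = fun x => 1 - ‖x‖ ^ 2 := funext hψ
  subst hψfun
  refine ⟨contDiff_const.sub (contDiff_norm_sq (𝕜 := ℝ)), ?_, ?_, ?_⟩
  · -- nonvanishing differential
    intro x hx1 hx2 hcontra
    have hder : HasFDerivAt (fun x : EuclideanSpace ℝ (Fin 2) => 1 - ‖x‖ ^ 2)
        (0 - 2 • (innerSL ℝ x)) x :=
      (hasFDerivAt_const (1:ℝ) x).sub (hasStrictFDerivAt_norm_sq x).hasFDerivAt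
    have hfd := hder.fderiv
    rw [hcontra] at hfd
    have h0 := congrArg (fun L : EuclideanSpace ℝ (Fin 2) →L[ℝ] ℝ => L x) hfd
    simp only [ContinuousLinearMap.zero_apply, ContinuousLinearMap.sub_apply,
      ContinuousLinearMap.smul_apply, innerSL_apply_apply, real_inner_self_eq_norm_sq] at h0
    have hxpos : 0 < ‖x‖ := lt_trans hR.1 hx1
    simp only [smul_eq_mul, zero_sub, two_smul] at h0
    nlinarith [h0, sq_nonneg ‖x‖]
  · -- zero level set
    ext x
    simp only [Set.mem_preimage, Set.mem_singleton_iff, mem_sphere_iff_norm, sub_zero]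
    constructor
    · intro h
      have hn := norm_nonneg x
      nlinarith
    · intro h; rw [h]; norm_num
  · -- strict convexity of level circles
    intro a b rr θθ hgeo h0 hdr0
    obtain ⟨hab, hrrC, hθC, hmem, hunit, hgeod⟩ := hgeo
    have hO : IsOpen (Ioo a b) := isOpen_Ioo
    have hr0mem : rr 0 ∈ Ioc R 1 := hmem 0 h0
    have hr0pos : (0:ℝ) < rr 0 := lt_trans hR.1 hr0mem.1
    have hφ0 : deriv θθ 0 ≠ 0 := by
      intro h
      have hu := hunit 0 h0
      rw [hdr0, h] at hu
      have h2 : F (rr 0) 0 0 = 0 := (hF.zero_iff (rr 0) hr0mem 0 0).mpr rfl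
      rw [h2] at hu
      norm_num at hu
    have hp : 0 < pr (sq2 F) (rr 0) 0 (deriv θθ 0) :=
      hHerglotz (rr 0) hr0mem (deriv θθ 0) hφ0
    have hg : (gM F (rr 0) 0 (deriv θθ 0)).PosDef :=
      hF.posdef (rr 0) hr0mem 0 (deriv θθ 0) (by simp [Prod.ext_iff, hφ0])
    set g := gM F (rr 0) 0 (deriv θθ 0) with hgdef
    have hdet : 0 < g.det := hg.det_pos
    have hd11 : 0 < g 1 1 := by
      have hne : (![0,1] : Fin 2 → ℝ) ≠ 0 := by
        intro h; simpa using congr_fun h 1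
      have := hg.dotProduct_mulVec_pos hne
      simpa [dotProduct, Matrix.mulVec, Fin.sum_univ_two] using this
    have hB : sprayB F (rr 0) 0 (deriv θθ 0) = ![-(pr (sq2 F) (rr 0) 0 (deriv θθ 0)), 0] := by
      funext i
      fin_cases i <;> simp [sprayB]
    have hginv : g⁻¹ = g.det⁻¹ • !![g 1 1, -(g 0 1); -(g 1 0), g 0 0] := by
      rw [Matrix.inv_def, Matrix.adjugate_fin_two, Ring.inverse_eq_inv]
    have hsprayval : spray F (rr 0) 0 (deriv θθ 0) 0 =
        (1/4) * (g.det⁻¹ * (g 1 1 * (-(pr (sq2 F) (rr 0) 0 (deriv θθ 0))))) := by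
      show (1/4) * (g⁻¹.mulVec (sprayB F (rr 0) 0 (deriv θθ 0)) 0) = _
      rw [hB, hginv]
      simp [Matrix.mulVec, dotProduct, Fin.sum_univ_two, smul_eq_mul]
      ring
    have hsneg : spray F (rr 0) 0 (deriv θθ 0) 0 < 0 := by
      rw [hsprayval]
      have h1 : 0 < g.det⁻¹ := inv_pos.mpr hdet
      nlinarith [mul_pos (mul_pos h1 hd11) hp]
    -- second derivative of rr at 0
    have hgeq := (hgeod 0 h0).1
    rw [hdr0] at hgeq
    have hddr : 0 < deriv (deriv rr) 0 := by nlinarith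
    -- differentiability facts
    have hdrrC : ContDiffOn ℝ (⊤ : ℕ∞) (deriv rr) (Ioo a b) :=
      hrrC.deriv_of_isOpen hO (by simp)
    have hdiff : ∀ t ∈ Ioo a b, HasDerivAt rr (deriv rr t) t := fun t ht =>
      ((hrrC.contDiffAt (hO.mem_nhds ht)).differentiableAt (by simp)).hasDerivAt
    have h1 : ∀ᶠ t in nhds 0, deriv (fun s => 1 - rr s ^ 2) t
        = -(2 * (rr t * deriv rr t)) := by
      filter_upwards [hO.mem_nhds h0] with t ht
      have hdt := hdiff t ht
      have h2 : HasDerivAt (fun s => 1 - rr s ^ 2) (-(2 * (rr t * deriv rr t))) t := by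
        have h3 := (hasDerivAt_const t (1:ℝ)).sub (hdt.pow 2)
        exact h3.congr_deriv (by simp; ring)
      exact h2.deriv
    have heq : deriv (deriv (fun t => 1 - rr t ^ 2)) 0
        = deriv (fun t => -(2 * (rr t * deriv rr t))) 0 :=
      Filter.EventuallyEq.deriv_eq h1
    have hdd0 : HasDerivAt (deriv rr) (deriv (deriv rr) 0) 0 :=
      ((hdrrC.contDiffAt (hO.mem_nhds h0)).differentiableAt (by simp)).hasDerivAt
    have hd0 : HasDerivAt rr (deriv rr 0) 0 := hdiff 0 h0
    have hprod : HasDerivAt (fun t => -(2 * (rr t * deriv rr t)))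
        (-(2 * (deriv rr 0 * deriv rr 0 + rr 0 * deriv (deriv rr) 0))) 0 :=
      ((hd0.mul hdd0).const_mul 2).neg
    have hfin := hprod.deriv
    rw [heq, hfin, hdr0]
    nlinarith
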